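/- Let p be a prime and Theta_p in F_p((X^{-1})) with continued fraction expansion [0, X, X^p, X^{p^2}, ...] and convergents p_n/q_n. Then there exist infinitely many rational functions p_n/q_n with |Theta_p - p_n/q_n| <= |q_n|^{-(p+1)}. In particular, for every Phi in F_p((X^{-1})), inf_{q != 0} |q| * ||q Theta_p|| * ||q Phi|| = 0. -/

import Mathlib

/-!
For irrational `Θ` with complete quotients `x_n` and partial quotients `a_n`, the errors
`D_n = q_n Θ - p_n` satisfy `D_{n+1} x_{n+2} = -D_n`. Since `|frac x| < 1`, every `x_{n+1}` has
`|x_{n+1}| = |a_{n+1}| > 1`, and the ultrametric inequality gives `|q_{n+1}| = |a_{n+1}| |q_n|`;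
hence `‖q_n Θ‖ = |D_n| = |q_{n+1}|⁻¹`. For `a_{n+1} = X ^ p ^ n` this yields
`|q_{n+1}| = 2 ^ p ^ n |q_n| = 2 |q_n| ^ p`, so
`|Θ - p_n / q_n| = (|q_n| |q_{n+1}|)⁻¹ < |q_n| ^ -(p+1)`, and
`|q_n| ‖q_n Θ‖ ‖q_n Φ‖ ≤ 2 ^ -p ^ n` because fractional parts have norm below `1`.
-/

open Polynomial Filter

noncomputable section
open scoped Classical

namespace Littlewood

variable (k : Type*) [Field k]

/-- The element `X` of `k((X⁻¹))`: the inverse of the Laurent-series variable `t = X⁻¹`. -/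
def XLS : LaurentSeries k := (HahnSeries.single (1 : ℤ) (1 : k))⁻¹

variable {k}

/-- Embedding of `k[X]` into `k((X⁻¹))`, sending the polynomial variable to `X`. -/
def emb (p : Polynomial k) : LaurentSeries k := Polynomial.aeval (XLS k) p

/-- The degree of a Laurent series in `X⁻¹`: if `F = ∑_{h ≥ -m} f_h X^{-h}` with
`f_{-m} ≠ 0` then `deg F = m`. -/
def deg (F : LaurentSeries k) : ℤ := -F.order

/-- The norm `|F| = 2 ^ deg F`, with `|0| = 0`. -/
def lnorm (F : LaurentSeries k) : ℝ := if F = 0 then 0 else (2 : ℝ) ^ (deg F)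

/-- Fractional part: the part of the series comprising only negative powers of `X`. -/
def frac (F : LaurentSeries k) : LaurentSeries k where
  coeff n := if 1 ≤ n then F.coeff n else 0
  isPWO_support' := F.isPWO_support'.mono (fun n hn => by
    simp only [Function.mem_support] at hn ⊢
    intro h
    exact hn (by simp [h]))

/-- `‖F‖`: the norm of the fractional part of `F`. -/
def fnorm (F : LaurentSeries k) : ℝ := lnorm (frac F)

/-- `F` is a rational function. -/
def IsRat (F : LaurentSeries k) : Prop :=
  ∃ p q : Polynomial k, q ≠ 0 ∧ F * emb q = emb p

/-- The polynomial part of a Laurent series (the part with nonnegative powers of `X`). -/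
def polyPart (F : LaurentSeries k) : Polynomial k :=
  ∑ i ∈ Finset.range ((-F.order).toNat + 1), Polynomial.C (F.coeff (-(i : ℤ))) * Polynomial.X ^ i

/-- The complete quotients of the continued fraction algorithm applied to `F`. -/
def cfRem (F : LaurentSeries k) : ℕ → LaurentSeries k
  | 0 => F
  | n + 1 => (cfRem F n - emb (polyPart (cfRem F n)))⁻¹

/-- The partial quotients of the continued fraction expansion of `F`. -/
def pq (F : LaurentSeries k) (n : ℕ) : Polynomial k := polyPart (cfRem F n)

/-- Denominators `q_n` of the convergents of the continued fraction with
partial quotients `a`. -/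
def den (a : ℕ → Polynomial k) : ℕ → Polynomial k
  | 0 => 1
  | 1 => a 1
  | n + 2 => a (n + 2) * den a (n + 1) + den a n

/-- Numerators `p_n` of the convergents. -/
def num (a : ℕ → Polynomial k) : ℕ → Polynomial k
  | 0 => a 0
  | 1 => a 1 * a 0 + 1
  | n + 2 => a (n + 2) * num a (n + 1) + num a n

/-- The value of a finite continued fraction `[b_0, b_1, …, b_m]` over `k[X]`. -/
def finCF : List (Polynomial k) → LaurentSeries k
  | [] => 0
  | [b] => emb b
  | b :: l => emb b + (finCF l)⁻¹

/-- `F` is badly approximable. -/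
def Bad (F : LaurentSeries k) : Prop :=
  ∃ c : ℝ, 0 < c ∧ ∀ q : Polynomial k, q ≠ 0 → c ≤ lnorm (emb q) * fnorm (emb q * F)

lemma XLS_eq_single : XLS k = HahnSeries.single (-1 : ℤ) (1 : k) := by
  refine inv_eq_of_mul_eq_one_right ?_
  rw [HahnSeries.single_mul_single]
  norm_num

lemma emb_C_mul_X_pow (c : k) (i : ℕ) :
    emb (C c * X ^ i) = HahnSeries.single (-(i : ℤ)) c := by
  rw [emb, map_mul, map_pow, aeval_X, aeval_C, XLS_eq_single, HahnSeries.single_pow,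
    HahnSeries.algebraMap_apply', ← PowerSeries.C_eq_algebraMap, HahnSeries.ofPowerSeries_C,
    HahnSeries.C_apply, HahnSeries.single_mul_single]
  simp

lemma emb_sum {ι : Type*} (s : Finset ι) (f : ι → k[X]) :
    emb (∑ i ∈ s, f i) = ∑ i ∈ s, emb (f i) :=
  map_sum (aeval (XLS k)) f s

@[simp] lemma emb_zero : emb (0 : k[X]) = 0 := map_zero (aeval (XLS k))

@[simp] lemma emb_one : emb (1 : k[X]) = 1 := map_one (aeval (XLS k))

lemma emb_add (q r : k[X]) : emb (q + r) = emb q + emb r := map_add (aeval (XLS k)) q r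

lemma emb_mul (q r : k[X]) : emb (q * r) = emb q * emb r := map_mul (aeval (XLS k)) q r

lemma emb_coeff_of_pos (q : k[X]) {n : ℤ} (hn : 0 < n) : (emb q).coeff n = 0 := by
  rw [q.as_sum_support_C_mul_X_pow, emb_sum, HahnSeries.coeff_sum]
  refine Finset.sum_eq_zero fun i _ => ?_
  rw [emb_C_mul_X_pow, HahnSeries.coeff_single, if_neg (by omega)]

lemma emb_coeff_neg (q : k[X]) (i : ℕ) : (emb q).coeff (-i) = q.coeff i := by
  conv_lhs => rw [q.as_sum_support_C_mul_X_pow, emb_sum, HahnSeries.coeff_sum]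
  simp_rw [emb_C_mul_X_pow, HahnSeries.coeff_single, neg_inj, Nat.cast_inj,
    Finset.sum_ite_eq, mem_support_iff, ne_eq, ite_not]
  split_ifs with h <;> simp [h]

lemma emb_ne_zero {q : k[X]} (hq : q ≠ 0) : emb q ≠ 0 := fun h =>
  hq (Polynomial.ext fun i => by simpa [h] using (emb_coeff_neg q i).symm)

lemma frac_coeff (F : LaurentSeries k) (n : ℤ) :
    (frac F).coeff n = if 1 ≤ n then F.coeff n else 0 := rfl

lemma emb_polyPart_coeff_of_nonpos (F : LaurentSeries k) {n : ℤ} (hn : n ≤ 0) :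
    (emb (polyPart F)).coeff n = F.coeff n := by
  rw [polyPart, emb_sum, HahnSeries.coeff_sum]
  simp_rw [emb_C_mul_X_pow, HahnSeries.coeff_single]
  by_cases hlt : n < F.order
  · rw [HahnSeries.coeff_eq_zero_of_lt_order hlt]
    refine Finset.sum_eq_zero fun i _ => ?_
    split_ifs with h
    · exact HahnSeries.coeff_eq_zero_of_lt_order (h ▸ hlt)
    · rfl
  · refine (Finset.sum_eq_single_of_mem (-n).toNat (Finset.mem_range.2 (by omega))
      fun i _ hi => if_neg (by omega)).trans ?_
    rw [if_pos (by omega)]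
    congr 1
    omega

lemma emb_polyPart_add_frac (F : LaurentSeries k) : emb (polyPart F) + frac F = F := by
  ext n
  rw [HahnSeries.coeff_add, frac_coeff]
  rcases le_or_gt n 0 with hn | hn
  · rw [emb_polyPart_coeff_of_nonpos F hn, if_neg (by omega), add_zero]
  · rw [emb_coeff_of_pos _ hn, if_pos (by omega), zero_add]

lemma frac_add_emb (F : LaurentSeries k) (q : k[X]) : frac (F + emb q) = frac F := by
  ext n
  rw [frac_coeff, frac_coeff]
  split_ifs with hn
  · rw [HahnSeries.coeff_add, emb_coeff_of_pos q (by omega), add_zero]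
  · rfl

@[simp] lemma lnorm_zero : lnorm (0 : LaurentSeries k) = 0 := if_pos rfl

lemma lnorm_of_ne_zero {F : LaurentSeries k} (hF : F ≠ 0) : lnorm F = 2 ^ (-F.order) :=
  if_neg hF

lemma lnorm_nonneg (F : LaurentSeries k) : 0 ≤ lnorm F := by
  unfold lnorm
  split_ifs <;> positivity

lemma lnorm_pos {F : LaurentSeries k} (hF : F ≠ 0) : 0 < lnorm F := by
  rw [lnorm_of_ne_zero hF]
  positivity

lemma lnorm_single {n : ℤ} {c : k} (hc : c ≠ 0) : lnorm (HahnSeries.single n c) = 2 ^ (-n) := by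
  rw [lnorm_of_ne_zero (HahnSeries.single_ne_zero hc), HahnSeries.order_single hc]

def lnormHom : LaurentSeries k →*₀ ℝ where
  toFun := lnorm
  map_zero' := lnorm_zero
  map_one' := by simpa using lnorm_single (n := 0) (one_ne_zero (α := k))
  map_mul' F G := by
    by_cases hF : F = 0
    · simp [hF]
    by_cases hG : G = 0
    · simp [hG]
    rw [lnorm_of_ne_zero (mul_ne_zero hF hG), lnorm_of_ne_zero hF, lnorm_of_ne_zero hG,
      HahnSeries.order_mul hF hG, neg_add, zpow_add₀ two_ne_zero]

@[simp] lemma lnorm_one : lnorm (1 : LaurentSeries k) = 1 := map_one lnormHom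

lemma lnorm_mul (F G : LaurentSeries k) : lnorm (F * G) = lnorm F * lnorm G :=
  map_mul lnormHom F G

lemma lnorm_inv (F : LaurentSeries k) : lnorm F⁻¹ = (lnorm F)⁻¹ := map_inv₀ lnormHom F

lemma lnorm_div (F G : LaurentSeries k) : lnorm (F / G) = lnorm F / lnorm G :=
  map_div₀ lnormHom F G

lemma lnorm_neg (F : LaurentSeries k) : lnorm (-F) = lnorm F := by
  simp [lnorm, deg, HahnSeries.order_neg]

lemma lnorm_emb_X_pow (m : ℕ) : lnorm (emb (X ^ m : k[X])) = 2 ^ m := by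
  rw [← one_mul (X ^ m), ← C_1, emb_C_mul_X_pow, lnorm_single one_ne_zero, neg_neg,
    zpow_natCast]

lemma lnorm_lt_lnorm_iff {F G : LaurentSeries k} (hF : F ≠ 0) (hG : G ≠ 0) :
    lnorm F < lnorm G ↔ G.order < F.order := by
  rw [lnorm_of_ne_zero hF, lnorm_of_ne_zero hG, zpow_lt_zpow_iff_right₀ one_lt_two,
    neg_lt_neg_iff]

lemma lnorm_lt_one_iff {F : LaurentSeries k} (hF : F ≠ 0) : lnorm F < 1 ↔ 0 < F.order := by
  simpa using lnorm_lt_lnorm_iff hF one_ne_zero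

lemma lnorm_add_eq_left {F G : LaurentSeries k} (h : lnorm G < lnorm F) :
    lnorm (F + G) = lnorm F := by
  have hF : F ≠ 0 := by
    rintro rfl
    exact (lnorm_nonneg G).not_gt (by simpa using h)
  have hlt : F.orderTop < G.orderTop := by
    by_cases hG : G = 0
    · simpa [hG] using hF
    rw [← HahnSeries.order_eq_orderTop_of_ne_zero hF,
      ← HahnSeries.order_eq_orderTop_of_ne_zero hG]
    exact WithTop.coe_lt_coe.2 ((lnorm_lt_lnorm_iff hG hF).1 h)
  have hsum := HahnSeries.orderTop_add_eq_left hlt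
  have hFG : F + G ≠ 0 := HahnSeries.orderTop_ne_top.1 (hsum ▸ HahnSeries.orderTop_ne_top.2 hF)
  have horder : (F + G).order = F.order := WithTop.coe_injective <| by
    rw [HahnSeries.order_eq_orderTop_of_ne_zero hFG, HahnSeries.order_eq_orderTop_of_ne_zero hF,
      hsum]
  rw [lnorm_of_ne_zero hFG, lnorm_of_ne_zero hF, horder]

lemma lnorm_frac_lt_one (F : LaurentSeries k) : lnorm (frac F) < 1 := by
  by_cases h : frac F = 0
  · simp [h]
  rw [lnorm_lt_one_iff h]
  by_contra! hle
  exact h (HahnSeries.coeff_order_eq_zero.1 (by rw [frac_coeff, if_neg (by omega)]))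

lemma frac_eq_self_of_lnorm_lt_one {F : LaurentSeries k} (h : lnorm F < 1) : frac F = F := by
  by_cases hF : F = 0
  · subst hF
    ext n
    simp [frac_coeff]
  have hpos := (lnorm_lt_one_iff hF).1 h
  ext n
  rw [frac_coeff]
  split_ifs with hn
  · rfl
  · exact (HahnSeries.coeff_eq_zero_of_lt_order (by omega)).symm

lemma lnorm_emb_polyPart_of_one_le {F : LaurentSeries k} (h : 1 ≤ lnorm F) :
    lnorm (emb (polyPart F)) = lnorm F := by
  rw [eq_add_neg_of_add_eq (emb_polyPart_add_frac F), lnorm_add_eq_left]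
  exact (lnorm_neg (frac F)).trans_lt ((lnorm_frac_lt_one F).trans_le h)

lemma isRat_emb (q : k[X]) : IsRat (emb q) := ⟨q, 1, one_ne_zero, by rw [emb_one, mul_one]⟩

lemma IsRat.add_emb {F : LaurentSeries k} (hF : IsRat F) (r : k[X]) : IsRat (F + emb r) := by
  obtain ⟨a, b, hb, hab⟩ := hF
  exact ⟨a + r * b, b, hb, by rw [emb_add, emb_mul, add_mul, hab]⟩

lemma IsRat.inv {F : LaurentSeries k} (hF : IsRat F) : IsRat F⁻¹ := by
  by_cases hF0 : F = 0
  · simpa [hF0] using isRat_emb (0 : k[X])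
  obtain ⟨a, b, hb, hab⟩ := hF
  have ha : a ≠ 0 := by
    rintro rfl
    exact mul_ne_zero hF0 (emb_ne_zero hb) (by simpa using hab)
  refine ⟨b, a, ha, mul_left_cancel₀ hF0 ?_⟩
  rw [← mul_assoc, mul_inv_cancel₀ hF0, one_mul, hab]

lemma ne_zero_of_not_isRat {F : LaurentSeries k} (hF : ¬IsRat F) : F ≠ 0 := by
  rintro rfl
  exact hF (by simpa using isRat_emb 0)

lemma frac_eq_sub (F : LaurentSeries k) : frac F = F - emb (polyPart F) :=
  eq_sub_of_add_eq' (emb_polyPart_add_frac F)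

lemma cfRem_succ (Θ : LaurentSeries k) (n : ℕ) :
    cfRem Θ (n + 1) = (frac (cfRem Θ n))⁻¹ := by
  rw [cfRem, frac_eq_sub]

lemma cfRem_eq_add_inv (Θ : LaurentSeries k) (n : ℕ) :
    cfRem Θ n = emb (pq Θ n) + (cfRem Θ (n + 1))⁻¹ := by
  rw [cfRem_succ, inv_inv, pq, emb_polyPart_add_frac]

lemma frac_ne_zero_of_not_isRat {F : LaurentSeries k} (hF : ¬IsRat F) : frac F ≠ 0 := by
  intro h
  rw [frac_eq_sub, sub_eq_zero] at h
  exact hF (h ▸ isRat_emb _)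

section Denominators

variable {a : ℕ → k[X]}

lemma lnorm_den_succ (ha : ∀ n, 1 < lnorm (emb (a (n + 1)))) (n : ℕ) :
    lnorm (emb (den a (n + 1))) = lnorm (emb (a (n + 1))) * lnorm (emb (den a n)) := by
  suffices ∀ n, 1 ≤ lnorm (emb (den a n)) ∧
      lnorm (emb (den a (n + 1))) = lnorm (emb (a (n + 1))) * lnorm (emb (den a n)) from
    (this n).2
  intro n
  induction n with
  | zero => simp [den]
  | succ n ih =>
    obtain ⟨hge, hsucc⟩ := ih
    have hge' : 1 ≤ lnorm (emb (den a (n + 1))) := by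
      rw [hsucc]
      exact one_le_mul_of_one_le_of_one_le (ha n).le hge
    refine ⟨hge', ?_⟩
    have hsmall : lnorm (emb (den a n)) < lnorm (emb (a (n + 2) * den a (n + 1))) := calc
      lnorm (emb (den a n)) ≤ lnorm (emb (den a (n + 1))) := by
        rw [hsucc]
        exact le_mul_of_one_le_left (lnorm_nonneg _) (ha n).le
      _ < lnorm (emb (a (n + 2))) * lnorm (emb (den a (n + 1))) :=
        lt_mul_of_one_lt_left (by linarith) (ha (n + 1))
      _ = lnorm (emb (a (n + 2) * den a (n + 1))) := by rw [emb_mul, lnorm_mul]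
    rw [den, emb_add, lnorm_add_eq_left hsmall, emb_mul, lnorm_mul]

lemma one_le_lnorm_den (ha : ∀ n, 1 < lnorm (emb (a (n + 1)))) (n : ℕ) :
    1 ≤ lnorm (emb (den a n)) := by
  induction n with
  | zero => simp [den]
  | succ n ih =>
    rw [lnorm_den_succ ha]
    exact one_le_mul_of_one_le_of_one_le (ha n).le ih

lemma den_ne_zero (ha : ∀ n, 1 < lnorm (emb (a (n + 1)))) (n : ℕ) : den a n ≠ 0 := by
  intro h
  have := one_le_lnorm_den ha n
  simp only [h, emb_zero, lnorm_zero] at this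
  linarith

end Denominators

section ContinuedFraction

variable {Θ : LaurentSeries k}

lemma not_isRat_cfRem (hΘ : ¬IsRat Θ) (n : ℕ) : ¬IsRat (cfRem Θ n) := by
  induction n with
  | zero => exact hΘ
  | succ n ih =>
    intro hr
    rw [cfRem_succ] at hr
    have hfrac : IsRat (frac (cfRem Θ n)) := by simpa using hr.inv
    exact ih (by simpa [frac_eq_sub, pq] using hfrac.add_emb (pq Θ n))

lemma cfRem_ne_zero (hΘ : ¬IsRat Θ) (n : ℕ) : cfRem Θ n ≠ 0 :=
  ne_zero_of_not_isRat (not_isRat_cfRem hΘ n)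

lemma one_lt_lnorm_cfRem_succ (hΘ : ¬IsRat Θ) (n : ℕ) : 1 < lnorm (cfRem Θ (n + 1)) := by
  rw [cfRem_succ, lnorm_inv]
  exact (one_lt_inv₀ (lnorm_pos (frac_ne_zero_of_not_isRat (not_isRat_cfRem hΘ n)))).2
    (lnorm_frac_lt_one _)

lemma lnorm_emb_pq_succ (hΘ : ¬IsRat Θ) (n : ℕ) :
    lnorm (emb (pq Θ (n + 1))) = lnorm (cfRem Θ (n + 1)) :=
  lnorm_emb_polyPart_of_one_le (one_lt_lnorm_cfRem_succ hΘ n).le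

lemma one_lt_lnorm_emb_pq_succ (hΘ : ¬IsRat Θ) (n : ℕ) : 1 < lnorm (emb (pq Θ (n + 1))) :=
  (lnorm_emb_pq_succ hΘ n).symm ▸ one_lt_lnorm_cfRem_succ hΘ n

def convergentError (Θ : LaurentSeries k) (n : ℕ) : LaurentSeries k :=
  emb (den (pq Θ) n) * Θ - emb (num (pq Θ) n)

lemma convergentError_zero (Θ : LaurentSeries k) : convergentError Θ 0 = (cfRem Θ 1)⁻¹ := by
  rw [cfRem_succ, inv_inv, frac_eq_sub, convergentError, den, num, emb_one, one_mul]
  rfl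

lemma convergentError_succ_succ (Θ : LaurentSeries k) (n : ℕ) :
    convergentError Θ (n + 2) =
      emb (pq Θ (n + 2)) * convergentError Θ (n + 1) + convergentError Θ n := by
  simp only [convergentError, den, num, emb_add, emb_mul]
  ring

lemma convergentError_succ_mul_cfRem (hΘ : ¬IsRat Θ) (n : ℕ) :
    convergentError Θ (n + 1) * cfRem Θ (n + 2) = -convergentError Θ n := by
  induction n with
  | zero =>
    have h₁ : cfRem Θ 1 * (cfRem Θ 1)⁻¹ = 1 := mul_inv_cancel₀ (cfRem_ne_zero hΘ 1)
    have h₂ : (cfRem Θ 2)⁻¹ * cfRem Θ 2 = 1 := inv_mul_cancel₀ (cfRem_ne_zero hΘ 2)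
    have hΘ_eq : Θ = emb (pq Θ 0) + (cfRem Θ 1)⁻¹ := cfRem_eq_add_inv Θ 0
    have ha₁ : emb (pq Θ 1) = cfRem Θ 1 - (cfRem Θ 2)⁻¹ :=
      eq_sub_of_add_eq (cfRem_eq_add_inv Θ 1).symm
    rw [convergentError_zero]
    simp only [convergentError, den, num, emb_add, emb_mul, emb_one]
    linear_combination emb (pq Θ 1) * cfRem Θ 2 * hΘ_eq +
      (cfRem Θ 1)⁻¹ * cfRem Θ 2 * ha₁ + cfRem Θ 2 * h₁ - (cfRem Θ 1)⁻¹ * h₂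
  | succ n ih =>
    have hinv : (cfRem Θ (n + 3))⁻¹ * cfRem Θ (n + 3) = 1 :=
      inv_mul_cancel₀ (cfRem_ne_zero hΘ _)
    have ha : emb (pq Θ (n + 2)) = cfRem Θ (n + 2) - (cfRem Θ (n + 3))⁻¹ :=
      eq_sub_of_add_eq (cfRem_eq_add_inv Θ (n + 2)).symm
    rw [convergentError_succ_succ, ha]
    linear_combination cfRem Θ (n + 3) * ih - convergentError Θ (n + 1) * hinv

lemma lnorm_convergentError (hΘ : ¬IsRat Θ) (n : ℕ) :
    lnorm (convergentError Θ n) = (lnorm (emb (den (pq Θ) (n + 1))))⁻¹ := by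
  induction n with
  | zero =>
    rw [convergentError_zero, lnorm_inv, ← lnorm_emb_pq_succ hΘ 0]
    rfl
  | succ n ih =>
    have hx := lnorm_pos (cfRem_ne_zero hΘ (n + 2))
    have h := congrArg lnorm (convergentError_succ_mul_cfRem hΘ n)
    rw [lnorm_mul, lnorm_neg, ih] at h
    rw [lnorm_den_succ (one_lt_lnorm_emb_pq_succ hΘ) (n + 1), lnorm_emb_pq_succ hΘ (n + 1),
      mul_inv, ← h]
    field_simp

theorem fnorm_emb_den_mul (hΘ : ¬IsRat Θ) (n : ℕ) :
    fnorm (emb (den (pq Θ) n) * Θ) = (lnorm (emb (den (pq Θ) (n + 1))))⁻¹ := by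
  have ha := one_lt_lnorm_emb_pq_succ hΘ
  have hden : 1 < lnorm (emb (den (pq Θ) (n + 1))) := by
    rw [lnorm_den_succ ha]
    exact one_lt_mul_of_lt_of_le (ha n) (one_le_lnorm_den ha n)
  have hsmall : lnorm (convergentError Θ n) < 1 := by
    rw [lnorm_convergentError hΘ]
    exact inv_lt_one_of_one_lt₀ hden
  rw [fnorm, ← sub_add_cancel (emb (den (pq Θ) n) * Θ) (emb (num (pq Θ) n)), frac_add_emb,
    ← convergentError, frac_eq_self_of_lnorm_lt_one hsmall, lnorm_convergentError hΘ]

theorem lnorm_sub_convergent (hΘ : ¬IsRat Θ) (n : ℕ) :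
    lnorm (Θ - emb (num (pq Θ) n) / emb (den (pq Θ) n)) =
      (lnorm (emb (den (pq Θ) n)) * lnorm (emb (den (pq Θ) (n + 1))))⁻¹ := by
  have hden := emb_ne_zero (den_ne_zero (one_lt_lnorm_emb_pq_succ hΘ) n)
  have h : Θ - emb (num (pq Θ) n) / emb (den (pq Θ) n) =
      convergentError Θ n / emb (den (pq Θ) n) := by
    rw [convergentError]
    field_simp
  rw [h, lnorm_div, lnorm_convergentError hΘ, mul_inv, div_eq_mul_inv, mul_comm]

end ContinuedFraction

section PowerQuotients

variable {a : ℕ → k[X]} {p : ℕ}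

lemma lnorm_den_succ_of_eq_X_pow (hp : 0 < p) (ha : ∀ n, a (n + 1) = X ^ p ^ n) (n : ℕ) :
    lnorm (emb (den a (n + 1))) = 2 ^ p ^ n * lnorm (emb (den a n)) := by
  have ha' : ∀ n, 1 < lnorm (emb (a (n + 1))) := fun n => by
    rw [ha, lnorm_emb_X_pow]
    exact one_lt_pow₀ one_lt_two (pow_pos hp n).ne'
  rw [lnorm_den_succ ha', ha, lnorm_emb_X_pow]

lemma lnorm_den_succ_eq_two_mul_pow (hp : 0 < p) (ha : ∀ n, a (n + 1) = X ^ p ^ n) (n : ℕ) :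
    lnorm (emb (den a (n + 1))) = 2 * lnorm (emb (den a n)) ^ p := by
  induction n with
  | zero =>
    rw [lnorm_den_succ_of_eq_X_pow hp ha 0]
    simp [den]
  | succ n ih =>
    rw [lnorm_den_succ_of_eq_X_pow hp ha (n + 1)]
    nth_rw 1 [ih]
    rw [lnorm_den_succ_of_eq_X_pow hp ha n, mul_pow, ← pow_mul, pow_succ]
    ring

end PowerQuotients

theorem mahler_example_well_approximable_general (p : ℕ) [Fact p.Prime] (Θ : LaurentSeries (ZMod p))
    (hΘ : ¬ IsRat Θ)
    (h : ∀ n : ℕ, pq Θ (n + 1) = Polynomial.X ^ p ^ n) :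
    (∀ N : ℕ, ∃ n : ℕ, N ≤ n ∧
        lnorm (Θ - emb (num (pq Θ) n) / emb (den (pq Θ) n)) ≤
          (lnorm (emb (den (pq Θ) n)) ^ (p + 1))⁻¹) ∧
      ∀ Φ : LaurentSeries (ZMod p), ∀ ε : ℝ, 0 < ε → ∃ q : Polynomial (ZMod p), q ≠ 0 ∧
        lnorm (emb q) * fnorm (emb q * Θ) * fnorm (emb q * Φ) < ε := by
  have hp : 1 < p := (Fact.out : p.Prime).one_lt
  have hq_pos n : 0 < lnorm (emb (den (pq Θ) n)) :=
    zero_lt_one.trans_le (one_le_lnorm_den (one_lt_lnorm_emb_pq_succ hΘ) n)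
  refine ⟨fun N => ⟨N, le_rfl, ?_⟩, fun Φ ε hε => ?_⟩
  · rw [lnorm_sub_convergent hΘ, lnorm_den_succ_eq_two_mul_pow (by omega) h, mul_left_comm,
      ← pow_succ']
    exact inv_anti₀ (pow_pos (hq_pos N) _)
      (le_mul_of_one_le_left (pow_pos (hq_pos N) _).le one_le_two)
  · obtain ⟨n, hn⟩ := exists_pow_lt_of_lt_one hε (by norm_num : (1 / 2 : ℝ) < 1)
    have hratio :
        lnorm (emb (den (pq Θ) n)) * fnorm (emb (den (pq Θ) n) * Θ) = (1 / 2) ^ p ^ n := by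
      rw [fnorm_emb_den_mul hΘ, lnorm_den_succ_of_eq_X_pow (by omega) h, one_div, inv_pow]
      field_simp [(hq_pos n).ne']
    refine ⟨den (pq Θ) n, den_ne_zero (one_lt_lnorm_emb_pq_succ hΘ) n, ?_⟩
    calc _ ≤ lnorm (emb (den (pq Θ) n)) * fnorm (emb (den (pq Θ) n) * Θ) :=
          mul_le_of_le_one_right (mul_nonneg (lnorm_nonneg _) (lnorm_nonneg _))
            (lnorm_frac_lt_one _).le
      _ = (1 / 2) ^ p ^ n := hratio
      _ ≤ (1 / 2) ^ n := pow_le_pow_of_le_one (by norm_num) (by norm_num) (Nat.lt_pow_self hp).le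
      _ < ε := hn

theorem mahler_example_well_approximable (p : ℕ) [Fact p.Prime] (Θ : LaurentSeries (ZMod p))
    (hΘ : ¬ IsRat Θ) (h0 : pq Θ 0 = 0)
    (h : ∀ n : ℕ, pq Θ (n + 1) = Polynomial.X ^ p ^ n) :
    (∀ N : ℕ, ∃ n : ℕ, N ≤ n ∧
        lnorm (Θ - emb (num (pq Θ) n) / emb (den (pq Θ) n)) ≤
          (lnorm (emb (den (pq Θ) n)) ^ (p + 1))⁻¹) ∧
      ∀ Φ : LaurentSeries (ZMod p), ∀ ε : ℝ, 0 < ε → ∃ q : Polynomial (ZMod p), q ≠ 0 ∧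
        lnorm (emb q) * fnorm (emb q * Θ) * fnorm (emb q * Φ) < ε :=
  mahler_example_well_approximable_general p Θ hΘ h

end Littlewood
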